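/- arXiv:2506.20385 — 4 statements merged into one kernel-verified Lean document; each statement's English description precedes it below -/
import Mathlib

section
/- Let X^{(k)} = (X_1^{(k)},…,X_n^{(k)}) be ℝ^n-valued random vectors converging in distribution to X = (X_1,…,X_n) with S = Σ_{i=1}^n X_i. Fix α ∈ (0,1) and assume that for each i ∈ [n] the quantile function of X_i (p ↦ inf{x : P(X_i ≤ x) ≥ p}) is continuous at 1−α, and that the quantile function of S is continuous on (0,1). Set α̃ = sup{β ∈ (0,1) : VaR_β(S) ≥ Σ_{i=1}^n VaR_α(X_i)} (sup ∅ = 0). Then liminf_{k→∞} DQ^{VaR}_α(X^{(k)}) ≥ DQ^{VaR}_α(X) and limsup_{k→∞} DQ^{VaR}_α(X^{(k)}) ≤ α̃/α. If in addition β ↦ VaR_β(S) is strictly decreasing on (0,1), then lim_{k→∞} DQ^{VaR}_α(X^{(k)}) = DQ^{VaR}_α(X). -/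
open MeasureTheory Filter Topology

/-- Value at Risk at level `β`: `VaR_β(Z) = inf {x : P(Z ≤ x) ≥ 1 − β}`. -/
noncomputable def VaR {Ω : Type*} [MeasurableSpace Ω] (P : Measure Ω) (β : ℝ) (Z : Ω → ℝ) : ℝ :=
  sInf {x : ℝ | 1 - β ≤ (P {ω | Z ω ≤ x}).toReal}

/-- The (left-continuous) quantile function `p ↦ inf {x : P(Z ≤ x) ≥ p}`. -/
noncomputable def quantileFn {Ω : Type*} [MeasurableSpace Ω] (P : Measure Ω) (Z : Ω → ℝ)
    (p : ℝ) : ℝ :=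
  sInf {x : ℝ | p ≤ (P {ω | Z ω ≤ x}).toReal}

/-- Diversification quotient based on the VaR class at level `α` (`I = (0,1)`, `inf ∅ = 1`). -/
noncomputable def DQVaR {Ω : Type*} [MeasurableSpace Ω] (P : Measure Ω) (α : ℝ)
    {n : ℕ} (X : Fin n → Ω → ℝ) : ℝ :=
  sInf (insert 1 {β : ℝ | β ∈ Set.Ioo (0:ℝ) 1 ∧
      VaR P β (fun ω => ∑ i, X i ω) ≤ ∑ i, VaR P α (X i)}) / α

/-! Convergence in distribution passes to quantiles at every continuity point of the limit
quantile function: by the portmanteau theorem for the closed half-line `Iic y` and the open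
half-line `Iio y`, using that the quantile is the inverse of the right-continuous cdf. The
continuous mapping theorem gives this for each `X_i` and for `S`, so the thresholds
`∑ VaR_α(X_i^{(k)})` and the curves `β ↦ VaR_β(S^{(k)})` converge pointwise on `(0,1)`.
For `t < α*` the limit curve is strictly above the threshold at `t`, hence so is the `k`-th one
eventually, and since VaR decreases in `β` this gives `t ≤ α*_k`; for `t > α̃` the limit curve is
strictly below the threshold at `t`, so eventually `α*_k ≤ t`. A strictly decreasing limit
curve forces `α̃ ≤ α*`. -/

open ProbabilityTheory Set

-- Right-continuity of the cdf makes `{x | p ≤ cdf μ x}` closed, so it contains its infimum.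
lemma sInf_setOf_le_cdf_le_iff (μ : Measure ℝ) {p y : ℝ} (hp : p ∈ Ioo (0 : ℝ) 1) :
    sInf {x | p ≤ cdf μ x} ≤ y ↔ p ≤ cdf μ y := by
  have hne : {x | p ≤ cdf μ x}.Nonempty :=
    (((tendsto_cdf_atTop μ).eventually_const_lt hp.2).mono fun _ => le_of_lt).exists
  have hbdd : BddBelow {x | p ≤ cdf μ x} := by
    obtain ⟨x₀, hx₀⟩ := ((tendsto_cdf_atBot μ).eventually_lt_const hp.1).exists_forall_of_atBot
    refine ⟨x₀, fun x hx => le_of_not_ge fun hlt => ?_⟩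
    exact (hx₀ x hlt).not_ge hx
  refine ⟨fun hy => ?_, fun hy => csInf_le hbdd hy⟩
  refine ge_of_tendsto (((cdf μ).right_continuous y).mono Ioi_subset_Ici_self) ?_
  filter_upwards [self_mem_nhdsWithin] with z hz
  obtain ⟨x, hx, hxz⟩ := exists_lt_of_csInf_lt hne (hy.trans_lt hz)
  exact hx.trans (monotone_cdf μ hxz.le)

section Quantile

variable {Ω : Type*} [MeasurableSpace Ω] {P : Measure Ω} [IsProbabilityMeasure P] {Z : Ω → ℝ}

lemma cdf_map_eq_toReal (hZ : AEMeasurable Z P) (x : ℝ) :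
    cdf (P.map Z) x = (P {ω | Z ω ≤ x}).toReal := by
  have := Measure.isProbabilityMeasure_map (μ := P) hZ
  rw [cdf_eq_real, measureReal_def, Measure.map_apply_of_aemeasurable hZ measurableSet_Iic]
  rfl

lemma quantileFn_le_iff (hZ : AEMeasurable Z P) {p y : ℝ} (hp : p ∈ Ioo (0 : ℝ) 1) :
    quantileFn P Z p ≤ y ↔ ENNReal.ofReal p ≤ P (Z ⁻¹' Iic y) := by
  have := Measure.isProbabilityMeasure_map (μ := P) hZ
  simp_rw [quantileFn, ← cdf_map_eq_toReal hZ, sInf_setOf_le_cdf_le_iff _ hp,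
    ← ENNReal.ofReal_le_ofReal_iff (cdf_nonneg _ _), ofReal_cdf,
    Measure.map_apply_of_aemeasurable hZ measurableSet_Iic]

lemma lt_quantileFn_iff (hZ : AEMeasurable Z P) {p y : ℝ} (hp : p ∈ Ioo (0 : ℝ) 1) :
    y < quantileFn P Z p ↔ P (Z ⁻¹' Iic y) < ENNReal.ofReal p := by
  simpa only [not_le] using (quantileFn_le_iff hZ hp).not

lemma monotoneOn_quantileFn (hZ : AEMeasurable Z P) : MonotoneOn (quantileFn P Z) (Ioo 0 1) :=
  fun _ hp _ hp' hpp' => (quantileFn_le_iff hZ hp).2 <|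
    (ENNReal.ofReal_le_ofReal hpp').trans ((quantileFn_le_iff hZ hp').1 le_rfl)

lemma antitoneOn_VaR (hZ : AEMeasurable Z P) : AntitoneOn (fun β => VaR P β Z) (Ioo 0 1) :=
  fun β hβ β' hβ' hββ' => monotoneOn_quantileFn hZ
    ⟨by linarith [hβ'.2], by linarith [hβ'.1]⟩ ⟨by linarith [hβ.2], by linarith [hβ.1]⟩
    (by linarith)

end Quantile

section Distribution

variable {Ω E ι : Type*} [MeasurableSpace Ω] {P : Measure Ω} [IsProbabilityMeasure P]
  [TopologicalSpace E] [MeasurableSpace E] [OpensMeasurableSpace E]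
  {L : Filter ι} {Zk : ι → Ω → E} {Z : Ω → E}

lemma tendstoInDistribution_of_forall_integral_tendsto (hZk : ∀ k, AEMeasurable (Zk k) P)
    (hZ : AEMeasurable Z P)
    (h : ∀ φ : BoundedContinuousFunction E ℝ,
      Tendsto (fun k => ∫ ω, φ (Zk k ω) ∂P) L (𝓝 (∫ ω, φ (Z ω) ∂P))) :
    TendstoInDistribution Zk L Z (fun _ => P) P where
  forall_aemeasurable := hZk
  aemeasurable_limit := hZ
  tendsto := ProbabilityMeasure.tendsto_iff_forall_integral_tendsto.2 fun φ => by
    simpa only [ProbabilityMeasure.coe_mk,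
      integral_map (hZk _) φ.continuous.aestronglyMeasurable,
      integral_map hZ φ.continuous.aestronglyMeasurable] using h φ

variable [HasOuterApproxClosed E]

lemma MeasureTheory.TendstoInDistribution.eventually_lt_measure_preimage_of_isOpen
    (h : TendstoInDistribution Zk L Z (fun _ => P) P) {G : Set E} (hG : IsOpen G)
    {a : ENNReal} (ha : a < P (Z ⁻¹' G)) : ∀ᶠ k in L, a < P (Zk k ⁻¹' G) := by
  have := ProbabilityMeasure.le_liminf_measure_open_of_tendsto h.tendsto hG
  simp only [ProbabilityMeasure.coe_mk, Measure.map_apply_of_aemeasurable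
    (h.forall_aemeasurable _) hG.measurableSet,
    Measure.map_apply_of_aemeasurable h.aemeasurable_limit hG.measurableSet] at this
  exact eventually_lt_of_lt_liminf (ha.trans_le this)

lemma MeasureTheory.TendstoInDistribution.eventually_measure_preimage_lt_of_isClosed
    (h : TendstoInDistribution Zk L Z (fun _ => P) P) {F : Set E} (hF : IsClosed F)
    {a : ENNReal} (ha : P (Z ⁻¹' F) < a) : ∀ᶠ k in L, P (Zk k ⁻¹' F) < a := by
  have := ProbabilityMeasure.limsup_measure_closed_le_of_tendsto h.tendsto hF
  simp only [ProbabilityMeasure.coe_mk, Measure.map_apply_of_aemeasurable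
    (h.forall_aemeasurable _) hF.measurableSet,
    Measure.map_apply_of_aemeasurable h.aemeasurable_limit hF.measurableSet] at this
  exact eventually_lt_of_limsup_lt (this.trans_lt ha)

end Distribution

theorem MeasureTheory.TendstoInDistribution.tendsto_quantileFn {Ω ι : Type*} [MeasurableSpace Ω]
    {P : Measure Ω} [IsProbabilityMeasure P] {L : Filter ι} {Zk : ι → Ω → ℝ} {Z : Ω → ℝ}
    (h : TendstoInDistribution Zk L Z (fun _ => P) P) {p : ℝ} (hp : p ∈ Ioo (0 : ℝ) 1)
    (hq : ContinuousAt (quantileFn P Z) p) :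
    Tendsto (fun k => quantileFn P (Zk k) p) L (𝓝 (quantileFn P Z p)) := by
  have hZ := h.aemeasurable_limit
  have hZk := h.forall_aemeasurable
  refine tendsto_order.2 ⟨fun a ha => ?_, fun b hb => ?_⟩
  · filter_upwards [h.eventually_measure_preimage_lt_of_isClosed isClosed_Iic
      ((lt_quantileFn_iff hZ hp).1 ha)] with k hk
    exact (lt_quantileFn_iff (hZk k) hp).2 hk
  · obtain ⟨p', ⟨hpp', hp'1⟩, hp'b⟩ : ∃ p' ∈ Ioo p 1, quantileFn P Z p' < b :=
      (Filter.Eventually.and (Ioo_mem_nhdsGT hp.2)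
        (nhdsWithin_le_nhds (hq.eventually (gt_mem_nhds hb)))).exists
    obtain ⟨b', hp'b', hb'b⟩ := exists_between hp'b
    have hmass : ENNReal.ofReal p < P (Z ⁻¹' Iio b') :=
      calc ENNReal.ofReal p < ENNReal.ofReal p' :=
            (ENNReal.ofReal_lt_ofReal_iff (hp.1.trans hpp')).2 hpp'
        _ ≤ P (Z ⁻¹' Iic (quantileFn P Z p')) :=
          (quantileFn_le_iff hZ ⟨hp.1.trans hpp', hp'1⟩).1 le_rfl
        _ ≤ P (Z ⁻¹' Iio b') := measure_mono (preimage_mono (Iic_subset_Iio.2 hp'b'))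
    filter_upwards [h.eventually_lt_measure_preimage_of_isOpen isOpen_Iio hmass] with k hk
    refine ((quantileFn_le_iff (hZk k) hp).2 ?_).trans_lt hb'b
    exact hk.le.trans (measure_mono (preimage_mono Iio_subset_Iic_self))

section CriticalLevel

/-- `α*` of the paper for the curve `g = (β ↦ VaR_β(S))` and threshold `c = ∑ VaR_α(X_i)`. -/
noncomputable def infLevelLE (g : ℝ → ℝ) (c : ℝ) : ℝ :=
  sInf (insert 1 {β | β ∈ Ioo (0 : ℝ) 1 ∧ g β ≤ c})

/-- `α̃` of the paper, with the same `g` and `c`. -/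
noncomputable def supLevelGE (g : ℝ → ℝ) (c : ℝ) : ℝ :=
  sSup {β | β ∈ Ioo (0 : ℝ) 1 ∧ c ≤ g β}

lemma bddBelow_insert_one_levels (g : ℝ → ℝ) (c : ℝ) :
    BddBelow (insert 1 {β | β ∈ Ioo (0 : ℝ) 1 ∧ g β ≤ c}) :=
  ⟨0, forall_mem_insert.2 ⟨zero_le_one, fun _ hβ => hβ.1.1.le⟩⟩

lemma infLevelLE_nonneg (g : ℝ → ℝ) (c : ℝ) : 0 ≤ infLevelLE g c :=
  le_csInf (insert_nonempty _ _) (forall_mem_insert.2 ⟨zero_le_one, fun _ hβ => hβ.1.1.le⟩)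

lemma infLevelLE_le_one (g : ℝ → ℝ) (c : ℝ) : infLevelLE g c ≤ 1 :=
  csInf_le (bddBelow_insert_one_levels g c) (mem_insert _ _)

lemma infLevelLE_le {g : ℝ → ℝ} {c β : ℝ} (hβ : β ∈ Ioo (0 : ℝ) 1) (hgβ : g β ≤ c) :
    infLevelLE g c ≤ β :=
  csInf_le (bddBelow_insert_one_levels g c) (mem_insert_of_mem _ ⟨hβ, hgβ⟩)

lemma le_infLevelLE_of_lt {g : ℝ → ℝ} {c t : ℝ} (hg : AntitoneOn g (Ioo 0 1))
    (ht : t ∈ Ioo (0 : ℝ) 1) (hct : c < g t) : t ≤ infLevelLE g c := by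
  refine le_csInf (insert_nonempty _ _) (forall_mem_insert.2 ⟨ht.2.le, fun β hβ => ?_⟩)
  exact le_of_not_ge fun hβt => (hct.trans_le (hg hβ.1 ht hβt)).not_ge hβ.2

lemma supLevelGE_le_infLevelLE {g : ℝ → ℝ} (c : ℝ) (hg : StrictAntiOn g (Ioo 0 1)) :
    supLevelGE g c ≤ infLevelLE g c := by
  refine Real.sSup_le (fun b hb => ?_) (infLevelLE_nonneg g c)
  refine le_csInf (insert_nonempty _ _) (forall_mem_insert.2 ⟨hb.1.2.le, fun β hβ => ?_⟩)
  exact le_of_not_gt fun hβb => (hg hβ.1 hb.1 hβb).not_ge (hβ.2.trans hb.2)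

variable {ι : Type*} {L : Filter ι} {gk : ι → ℝ → ℝ} {g : ℝ → ℝ} {ck : ι → ℝ} {c : ℝ}

lemma eventually_lt_infLevelLE (hg : ∀ β ∈ Ioo (0 : ℝ) 1, Tendsto (fun k => gk k β) L (𝓝 (g β)))
    (hc : Tendsto ck L (𝓝 c)) (hanti : ∀ k, AntitoneOn (gk k) (Ioo 0 1)) {t : ℝ}
    (ht : t < infLevelLE g c) : ∀ᶠ k in L, t < infLevelLE (gk k) (ck k) := by
  rcases lt_or_ge t 0 with ht0 | ht0
  · exact Eventually.of_forall fun k => ht0.trans_le (infLevelLE_nonneg _ _)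
  obtain ⟨t', htt', ht'⟩ := exists_between ht
  have ht'01 : t' ∈ Ioo (0 : ℝ) 1 := ⟨ht0.trans_lt htt', ht'.trans_le (infLevelLE_le_one g c)⟩
  have hct' : c < g t' := lt_of_not_ge fun h => (infLevelLE_le ht'01 h).not_gt ht'
  filter_upwards [hc.eventually_lt (hg t' ht'01) hct'] with k hk
  exact htt'.trans_le (le_infLevelLE_of_lt (hanti k) ht'01 hk)

lemma eventually_infLevelLE_lt (hg : ∀ β ∈ Ioo (0 : ℝ) 1, Tendsto (fun k => gk k β) L (𝓝 (g β)))
    (hc : Tendsto ck L (𝓝 c)) {t : ℝ} (ht : supLevelGE g c < t) :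
    ∀ᶠ k in L, infLevelLE (gk k) (ck k) < t := by
  rcases lt_or_ge 1 t with ht1 | ht1
  · exact Eventually.of_forall fun k => (infLevelLE_le_one _ _).trans_lt ht1
  have hsup0 : 0 ≤ supLevelGE g c := Real.sSup_nonneg fun _ hβ => hβ.1.1.le
  obtain ⟨t', hsupt', ht't⟩ := exists_between ht
  have ht'01 : t' ∈ Ioo (0 : ℝ) 1 := ⟨hsup0.trans_lt hsupt', ht't.trans_le ht1⟩
  have hgt' : g t' < c := lt_of_not_ge fun h =>
    (le_csSup (s := {β | β ∈ Ioo (0 : ℝ) 1 ∧ c ≤ g β}) ⟨1, fun _ hβ => hβ.1.2.le⟩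
      ⟨ht'01, h⟩).not_gt hsupt'
  filter_upwards [(hg t' ht'01).eventually_lt hc hgt'] with k hk
  exact (infLevelLE_le ht'01 hk.le).trans_lt ht't

end CriticalLevel

section DQ

variable {Ω ι : Type*} [MeasurableSpace Ω] {P : Measure Ω} {α : ℝ} {n : ℕ}
  {L : Filter ι} {Xk : ι → Fin n → Ω → ℝ} {X : Fin n → Ω → ℝ}

lemma isBoundedUnder_le_DQVaR (hα : 0 < α) :
    IsBoundedUnder (· ≤ ·) L fun k => DQVaR P α (Xk k) :=
  isBoundedUnder_of ⟨1 / α, fun _ => div_le_div_of_nonneg_right (infLevelLE_le_one _ _) hα.le⟩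

lemma isBoundedUnder_ge_DQVaR (hα : 0 ≤ α) :
    IsBoundedUnder (· ≥ ·) L fun k => DQVaR P α (Xk k) :=
  isBoundedUnder_of ⟨0, fun _ => div_nonneg (infLevelLE_nonneg _ _) hα⟩

lemma DQVaR_le_liminf [L.NeBot] (hα : 0 < α)
    (hg : ∀ β ∈ Ioo (0 : ℝ) 1, Tendsto (fun k => VaR P β fun ω => ∑ i, Xk k i ω) L
      (𝓝 (VaR P β fun ω => ∑ i, X i ω)))
    (hc : Tendsto (fun k => ∑ i, VaR P α (Xk k i)) L (𝓝 (∑ i, VaR P α (X i))))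
    (hanti : ∀ k, AntitoneOn (fun β => VaR P β fun ω => ∑ i, Xk k i ω) (Ioo 0 1)) :
    DQVaR P α X ≤ L.liminf fun k => DQVaR P α (Xk k) :=
  le_of_forall_lt_imp_le_of_dense fun _ ht =>
    le_liminf_of_le (isBoundedUnder_le_DQVaR hα).isCoboundedUnder_ge <|
      (eventually_lt_infLevelLE hg hc hanti ((lt_div_iff₀ hα).1 ht)).mono
        fun _ hk => ((lt_div_iff₀ hα).2 hk).le

lemma limsup_DQVaR_le [L.NeBot] (hα : 0 < α)
    (hg : ∀ β ∈ Ioo (0 : ℝ) 1, Tendsto (fun k => VaR P β fun ω => ∑ i, Xk k i ω) L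
      (𝓝 (VaR P β fun ω => ∑ i, X i ω)))
    (hc : Tendsto (fun k => ∑ i, VaR P α (Xk k i)) L (𝓝 (∑ i, VaR P α (X i)))) :
    (L.limsup fun k => DQVaR P α (Xk k)) ≤
      supLevelGE (fun β => VaR P β fun ω => ∑ i, X i ω) (∑ i, VaR P α (X i)) / α :=
  le_of_forall_gt_imp_ge_of_dense fun _ ht =>
    limsup_le_of_le (isBoundedUnder_ge_DQVaR hα.le).isCoboundedUnder_le <|
      (eventually_infLevelLE_lt hg hc ((div_lt_iff₀ hα).1 ht)).mono
        fun _ hk => ((div_lt_iff₀ hα).2 hk).le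

end DQ

/-- continuity (consistency) of `DQ^{VaR}_α` along convergence in distribution:
if `X^{(k)} → X` in distribution, the quantile function of each `X_i` is continuous at `1−α`
and the quantile function of `S` is continuous on `(0,1)`, then
`liminf_k DQ^{VaR}_α(X^{(k)}) ≥ DQ^{VaR}_α(X)` and `limsup_k DQ^{VaR}_α(X^{(k)}) ≤ α̃/α`;
if moreover `β ↦ VaR_β(S)` is strictly decreasing on `(0,1)`, then
`DQ^{VaR}_α(X^{(k)}) → DQ^{VaR}_α(X)`. -/
theorem DQVaR_convergence_in_distribution
    {Ω : Type*} [MeasurableSpace Ω] (P : Measure Ω) [IsProbabilityMeasure P]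
    {n : ℕ} (Xk : ℕ → Fin n → Ω → ℝ) (X : Fin n → Ω → ℝ)
    (hXkm : ∀ k i, Measurable (Xk k i)) (hXm : ∀ i, Measurable (X i))
    -- convergence in distribution of the random vectors `X^{(k)}` to `X`
    (hconv : ∀ φ : BoundedContinuousFunction (Fin n → ℝ) ℝ,
      Tendsto (fun k => ∫ ω, φ (fun i => Xk k i ω) ∂P) atTop
        (𝓝 (∫ ω, φ (fun i => X i ω) ∂P)))
    (α : ℝ) (hα : α ∈ Set.Ioo (0:ℝ) 1)
    (hqX : ∀ i, ContinuousAt (quantileFn P (X i)) (1 - α))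
    (hqS : ContinuousOn (quantileFn P (fun ω => ∑ i, X i ω)) (Set.Ioo (0:ℝ) 1))
    (αtilde : ℝ)
    (hαtilde : αtilde = sSup {β : ℝ | β ∈ Set.Ioo (0:ℝ) 1 ∧
        (∑ i, VaR P α (X i)) ≤ VaR P β (fun ω => ∑ i, X i ω)}) :
    (DQVaR P α X ≤ atTop.liminf (fun k => DQVaR P α (Xk k))
      ∧ atTop.limsup (fun k => DQVaR P α (Xk k)) ≤ αtilde / α)
    ∧ (StrictAntiOn (fun β => VaR P β (fun ω => ∑ i, X i ω)) (Set.Ioo (0:ℝ) 1) →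
        Tendsto (fun k => DQVaR P α (Xk k)) atTop (𝓝 (DQVaR P α X))) := by
  obtain ⟨hα0, hα1⟩ := hα
  obtain rfl : αtilde = supLevelGE (fun β => VaR P β fun ω => ∑ i, X i ω) (∑ i, VaR P α (X i)) :=
    hαtilde
  have hD : TendstoInDistribution (fun k ω i => Xk k i ω) atTop (fun ω i => X i ω)
      (fun _ => P) P :=
    tendstoInDistribution_of_forall_integral_tendsto
      (fun k => (measurable_pi_lambda _ (hXkm k)).aemeasurable)
      (measurable_pi_lambda _ hXm).aemeasurable hconv
  have hc : Tendsto (fun k => ∑ i, VaR P α (Xk k i)) atTop (𝓝 (∑ i, VaR P α (X i))) :=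
    tendsto_finsetSum _ fun i _ => (hD.continuous_comp (continuous_apply i)).tendsto_quantileFn
      ⟨by linarith, by linarith⟩ (hqX i)
  have hg : ∀ β ∈ Ioo (0 : ℝ) 1, Tendsto (fun k => VaR P β fun ω => ∑ i, Xk k i ω) atTop
      (𝓝 (VaR P β fun ω => ∑ i, X i ω)) := fun β hβ =>
    have h1β : 1 - β ∈ Ioo (0 : ℝ) 1 := ⟨by linarith [hβ.2], by linarith [hβ.1]⟩
    (hD.continuous_comp (continuous_finsetSum _ fun i _ => continuous_apply i)).tendsto_quantileFn
      h1β (hqS.continuousAt (isOpen_Ioo.mem_nhds h1β))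
  have hanti : ∀ k, AntitoneOn (fun β => VaR P β fun ω => ∑ i, Xk k i ω) (Ioo 0 1) := fun k =>
    antitoneOn_VaR (Finset.measurable_sum _ fun i _ => hXkm k i).aemeasurable
  have hliminf := DQVaR_le_liminf hα0 hg hc hanti
  have hlimsup := limsup_DQVaR_le hα0 hg hc
  refine ⟨⟨hliminf, hlimsup⟩, fun hstrict => ?_⟩
  refine tendsto_of_le_liminf_of_limsup_le hliminf (hlimsup.trans ?_)
    (isBoundedUnder_le_DQVaR hα0) (isBoundedUnder_ge_DQVaR hα0.le)
  exact div_le_div_of_nonneg_right (supLevelGE_le_infLevelLE _ hstrict) hα0.le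
end

section
/- Let X^{(1)}, X^{(2)}, … be i.i.d. copies of X = (X_1,…,X_n) with S = Σ_{i=1}^n X_i. Fix α ∈ (0,1) and assume that the quantile function of each X_i is continuous at 1−α and that the quantile function of S is continuous on (0,1). Set α̃ = sup{β ∈ (0,1) : VaR_β(S) ≥ Σ_{i=1}^n VaR_α(X_i)} (sup ∅ = 0). Then almost surely liminf_{N→∞} DQ̂^{VaR}_α(N) ≥ DQ^{VaR}_α(X) and limsup_{N→∞} DQ̂^{VaR}_α(N) ≤ α̃/α. If in addition β ↦ VaR_β(S) is strictly decreasing on (0,1), then DQ̂^{VaR}_α(N) → DQ^{VaR}_α(X) almost surely as N → ∞. -/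
open MeasureTheory ProbabilityTheory Filter Topology
open scoped ENNReal

/-- VaR of a distribution `μ` on `ℝ`. -/
noncomputable def mVaR (μ : Measure ℝ) (β : ℝ) : ℝ :=
  sInf {x : ℝ | 1 - β ≤ (μ (Set.Iic x)).toReal}

/-- `DQ^{VaR}_α` of a joint distribution `ν` on `ℝⁿ`. -/
noncomputable def mDQVaR {n : ℕ} (ν : Measure (Fin n → ℝ)) (α : ℝ) : ℝ :=
  sInf (insert 1 {β : ℝ | β ∈ Set.Ioo (0:ℝ) 1 ∧
      mVaR (ν.map (fun x => ∑ i, x i)) β ≤ ∑ i, mVaR (ν.map (fun x => x i)) α}) / α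

/-- The empirical joint distribution (on `ℝⁿ`) of the first `N` values of `v`. -/
noncomputable def empJoint {n : ℕ} (N : ℕ) (v : ℕ → Fin n → ℝ) : Measure (Fin n → ℝ) :=
  (N : ℝ≥0∞)⁻¹ • ∑ k ∈ Finset.range N, MeasureTheory.Measure.dirac (v k)

/-!
By the strong law of large numbers, almost surely the empirical distribution functions of `S`
and of every `Xᵢ` converge to the true ones at all rational points; hence the empirical quantiles
converge at every continuity point of the true quantile function. So the empirical
`∑ VaR_α(Xᵢ)` converges to `A = ∑ VaR_α(Xᵢ)`, and the empirical `VaR_β(S)` to `VaR_β(S)` for every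
`β ∈ (0,1)`. A level `β < α*` has `VaR_β(S) > A`; this strict inequality persists for the
empirical quantities and, the empirical `VaR_β(S)` being antitone in `β`, eventually forces the
empirical `α*` above `β`. A level `β > α̃` has `VaR_β(S) < A`, which persists and eventually puts
the empirical `α*` below `β`. When `β ↦ VaR_β(S)` is strictly decreasing, `α* = α̃`.
-/

open Set

noncomputable def quantile (μ : Measure ℝ) (p : ℝ) : ℝ := sInf {x | p ≤ μ.real (Iic x)}

section Quantile

variable {μ : Measure ℝ} {p x : ℝ}

lemma monotone_measureReal_Iic [IsFiniteMeasure μ] : Monotone fun x => μ.real (Iic x) :=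
  fun _ _ h => measureReal_mono (Iic_subset_Iic.2 h)

lemma tendsto_measureReal_Iic_atBot [IsFiniteMeasure μ] :
    Tendsto (fun x => μ.real (Iic x)) atBot (𝓝 0) := by
  have h := tendsto_measure_iInter_atBot (μ := μ) (fun x => measurableSet_Iic.nullMeasurableSet)
    monotone_Iic ⟨0, measure_ne_top μ _⟩
  rw [iInter_Iic_eq_empty_iff.2 (by simp [not_bddBelow_univ]), measure_empty] at h
  exact (ENNReal.tendsto_toReal ENNReal.zero_ne_top).comp h

lemma tendsto_measureReal_Iic_atTop [IsProbabilityMeasure μ] :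
    Tendsto (fun x => μ.real (Iic x)) atTop (𝓝 1) :=
  (tendsto_cdf_atTop μ).congr (cdf_eq_real μ)

lemma bddBelow_quantile_set [IsFiniteMeasure μ] (hp : 0 < p) :
    BddBelow {x | p ≤ μ.real (Iic x)} := by
  obtain ⟨b, hb⟩ := eventually_atBot.1
    ((tendsto_measureReal_Iic_atBot (μ := μ)).eventually_lt_const hp)
  exact ⟨b, fun x hx => le_of_not_gt fun hxb => (hb x hxb.le).not_ge hx⟩

lemma nonempty_quantile_set [IsProbabilityMeasure μ] (hp : p < 1) :
    {x | p ≤ μ.real (Iic x)}.Nonempty :=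
  (tendsto_measureReal_Iic_atTop.eventually_const_le hp).exists

lemma quantile_le [IsFiniteMeasure μ] (hp : 0 < p) (hx : p ≤ μ.real (Iic x)) :
    quantile μ p ≤ x :=
  csInf_le (bddBelow_quantile_set hp) hx

lemma measureReal_Iic_lt_of_lt_quantile [IsFiniteMeasure μ] (hp : 0 < p)
    (hx : x < quantile μ p) : μ.real (Iic x) < p :=
  lt_of_not_ge fun h => (quantile_le hp h).not_gt hx

lemma le_measureReal_Iic_of_quantile_lt [IsProbabilityMeasure μ] (hp : p ∈ Ioo 0 1)
    (hx : quantile μ p < x) : p ≤ μ.real (Iic x) := by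
  obtain ⟨y, hy, hyx⟩ :=
    (csInf_lt_iff (bddBelow_quantile_set hp.1) (nonempty_quantile_set hp.2)).1 hx
  exact hy.trans (monotone_measureReal_Iic hyx.le)

lemma le_quantile [IsFiniteMeasure μ] (hne : {x | p ≤ μ.real (Iic x)}.Nonempty)
    (hx : μ.real (Iic x) < p) : x ≤ quantile μ p :=
  le_csInf hne fun _ hy => le_of_not_gt fun hyx =>
    (hx.trans_le hy).not_ge (monotone_measureReal_Iic hyx.le)

lemma monotoneOn_quantile [IsProbabilityMeasure μ] : MonotoneOn (quantile μ) (Ioo 0 1) :=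
  fun _ hp _ hq hpq => csInf_le_csInf (bddBelow_quantile_set hp.1) (nonempty_quantile_set hq.2)
    fun _ hx => hpq.trans hx

theorem tendsto_quantile_of_tendsto_measureReal_Iic [IsProbabilityMeasure μ] {ι : Type*}
    {l : Filter ι} {μs : ι → Measure ℝ} [∀ i, IsFiniteMeasure (μs i)] (hp : p ∈ Ioo 0 1)
    (hq : ContinuousAt (quantile μ) p)
    (hconv : ∀ r : ℚ, Tendsto (fun i => (μs i).real (Iic r)) l (𝓝 (μ.real (Iic r)))) :
    Tendsto (fun i => quantile (μs i) p) l (𝓝 (quantile μ p)) := by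
  have upper : ∀ c > quantile μ p, ∀ᶠ i in l, ∃ r : ℚ, (r : ℝ) < c ∧ p ≤ (μs i).real (Iic r) := by
    intro c hc
    obtain ⟨p', ⟨hpp', hp'1⟩, hp'c⟩ := (Filter.Eventually.and (Ioo_mem_nhdsGT hp.2)
      (hq.continuousWithinAt.eventually (eventually_lt_nhds hc))).exists
    obtain ⟨r, hp'r, hrc⟩ := exists_rat_btwn hp'c
    have hpr : p < μ.real (Iic r) :=
      hpp'.trans_le (le_measureReal_Iic_of_quantile_lt ⟨hp.1.trans hpp', hp'1⟩ hp'r)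
    filter_upwards [(hconv r).eventually_const_le hpr] with i hi
    exact ⟨r, hrc, hi⟩
  refine tendsto_order.2 ⟨fun c hc => ?_, fun c hc => ?_⟩
  · obtain ⟨p', ⟨hp'0, hp'p⟩, hcp'⟩ := (Filter.Eventually.and (Ioo_mem_nhdsLT hp.1)
      (hq.continuousWithinAt.eventually (eventually_gt_nhds hc))).exists
    obtain ⟨r, hcr, hrp'⟩ := exists_rat_btwn hcp'
    have hrp : μ.real (Iic r) < p := (measureReal_Iic_lt_of_lt_quantile hp'0 hrp').trans hp'p
    -- `upper`, at any level, supplies the nonempty level set that `le_quantile` needs.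
    filter_upwards [(hconv r).eventually_lt_const hrp, upper _ (lt_add_one _)] with i hi hne
    obtain ⟨r', -, hr'⟩ := hne
    exact hcr.trans_le (le_quantile ⟨r', hr'⟩ hi)
  · filter_upwards [upper c hc] with i hi
    obtain ⟨r, hrc, hr⟩ := hi
    exact (quantile_le hp.1 hr).trans_lt hrc

end Quantile

lemma antitoneOn_mVaR {μ : Measure ℝ} [IsProbabilityMeasure μ] : AntitoneOn (mVaR μ) (Ioo 0 1) :=
  fun _ hb _ hβ hbβ => monotoneOn_quantile ⟨by linarith [hβ.2], by linarith [hβ.1]⟩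
    ⟨by linarith [hb.2], by linarith [hb.1]⟩ (by linarith)

section JointLaw

variable {Ω : Type*} [MeasurableSpace Ω] {P : Measure Ω} {n : ℕ} {X : Fin n → Ω → ℝ}

lemma quantileFn_eq_quantile_map {Z : Ω → ℝ} (hZ : Measurable Z) :
    quantileFn P Z = quantile (P.map Z) := by
  ext p
  simp only [quantileFn, quantile, map_measureReal_apply hZ measurableSet_Iic, measureReal_def]
  rfl

lemma quantileFn_sum_eq_quantile_map (hX : ∀ i, Measurable (X i)) :
    quantileFn P (fun ω => ∑ i, X i ω) =
      quantile ((P.map fun ω i => X i ω).map fun x => ∑ i, x i) := by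
  rw [quantileFn_eq_quantile_map (by fun_prop),
    Measure.map_map (by fun_prop) (measurable_pi_lambda _ hX)]
  rfl

lemma quantileFn_eq_quantile_map_eval (hX : ∀ i, Measurable (X i)) (i : Fin n) :
    quantileFn P (X i) = quantile ((P.map fun ω i => X i ω).map fun x => x i) := by
  rw [quantileFn_eq_quantile_map (hX i),
    Measure.map_map (measurable_pi_apply i) (measurable_pi_lambda _ hX)]
  rfl

lemma VaR_sum_eq_mVaR_map (hX : ∀ i, Measurable (X i)) (β : ℝ) :
    VaR P β (fun ω => ∑ i, X i ω) = mVaR ((P.map fun ω i => X i ω).map fun x => ∑ i, x i) β :=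
  congrFun (quantileFn_sum_eq_quantile_map hX) (1 - β)

lemma VaR_eq_mVaR_map_eval (hX : ∀ i, Measurable (X i)) (i : Fin n) (β : ℝ) :
    VaR P β (X i) = mVaR ((P.map fun ω i => X i ω).map fun x => x i) β :=
  congrFun (quantileFn_eq_quantile_map_eval hX i) (1 - β)

lemma DQVaR_eq_mDQVaR_map (hX : ∀ i, Measurable (X i)) (α : ℝ) :
    DQVaR P α X = mDQVaR (P.map fun ω i => X i ω) α := by
  simp only [DQVaR, mDQVaR, VaR_sum_eq_mVaR_map hX, VaR_eq_mVaR_map_eval hX]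

end JointLaw

-- `α*` and `α̃` of the paper, for `g β = VaR_β(S)` and `A = ∑ VaR_α(Xᵢ)`.
noncomputable def alphaStar (g : ℝ → ℝ) (A : ℝ) : ℝ :=
  sInf (insert 1 {β | β ∈ Ioo (0:ℝ) 1 ∧ g β ≤ A})

noncomputable def alphaTilde (g : ℝ → ℝ) (A : ℝ) : ℝ :=
  sSup {β | β ∈ Ioo (0:ℝ) 1 ∧ A ≤ g β}

section AlphaStar

variable {g : ℝ → ℝ} {A β c : ℝ}

lemma bddBelow_alphaStar_set : BddBelow (insert 1 {β | β ∈ Ioo (0:ℝ) 1 ∧ g β ≤ A}) :=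
  ⟨0, forall_mem_insert.2 ⟨zero_le_one, fun _ hb => hb.1.1.le⟩⟩

lemma alphaStar_nonneg : 0 ≤ alphaStar g A :=
  le_csInf (insert_nonempty _ _) (forall_mem_insert.2 ⟨zero_le_one, fun _ hb => hb.1.1.le⟩)

lemma alphaStar_le_one : alphaStar g A ≤ 1 :=
  csInf_le bddBelow_alphaStar_set (mem_insert _ _)

lemma alphaStar_le (hβ : β ∈ Ioo 0 1) (h : g β ≤ A) : alphaStar g A ≤ β :=
  csInf_le bddBelow_alphaStar_set (mem_insert_of_mem _ ⟨hβ, h⟩)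

lemma le_alphaStar (hβ : β ≤ 1) (h : ∀ b ∈ Ioo 0 1, g b ≤ A → β ≤ b) : β ≤ alphaStar g A :=
  le_csInf (insert_nonempty _ _) (forall_mem_insert.2 ⟨hβ, fun b hb => h b hb.1 hb.2⟩)

lemma lt_of_lt_alphaStar (hβ0 : 0 < β) (hβ : β < alphaStar g A) : A < g β :=
  lt_of_not_ge fun h => (alphaStar_le ⟨hβ0, hβ.trans_le alphaStar_le_one⟩ h).not_gt hβ

lemma alphaTilde_nonneg : 0 ≤ alphaTilde g A :=
  Real.sSup_nonneg fun _ hb => hb.1.1.le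

lemma le_alphaTilde (hβ : β ∈ Ioo 0 1) (h : A ≤ g β) : β ≤ alphaTilde g A :=
  le_csSup ⟨1, fun _ hb => hb.1.2.le⟩ ⟨hβ, h⟩

lemma lt_of_alphaTilde_lt (hβ : β ∈ Ioo 0 1) (h : alphaTilde g A < β) : g β < A :=
  lt_of_not_ge fun hA => (le_alphaTilde hβ hA).not_gt h

lemma alphaStar_le_of_alphaTilde_lt (hc : alphaTilde g A < c) : alphaStar g A ≤ c := by
  rcases le_or_gt 1 c with h1 | h1
  · exact alphaStar_le_one.trans h1
  · have hc' : c ∈ Ioo 0 1 := ⟨alphaTilde_nonneg.trans_lt hc, h1⟩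
    exact alphaStar_le hc' (lt_of_alphaTilde_lt hc' hc).le

lemma alphaStar_eq_alphaTilde (hg : StrictAntiOn g (Ioo 0 1)) :
    alphaStar g A = alphaTilde g A := by
  refine le_antisymm (le_of_forall_gt_imp_ge_of_dense fun c => alphaStar_le_of_alphaTilde_lt) ?_
  refine le_alphaStar (Real.sSup_le (fun _ hb => hb.1.2.le) zero_le_one) fun b hb hbA => ?_
  exact Real.sSup_le (fun y hy => le_of_not_gt fun hby =>
    (hg hb hy.1 hby).not_ge (hbA.trans hy.2)) hb.1.le

variable {ι : Type*} {l : Filter ι} {gs : ι → ℝ → ℝ} {As : ι → ℝ}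

lemma eventually_lt_alphaStar (hA : Tendsto As l (𝓝 A))
    (hg : ∀ β ∈ Ioo 0 1, Tendsto (gs · β) l (𝓝 (g β)))
    (hanti : ∀ᶠ i in l, AntitoneOn (gs i) (Ioo 0 1)) (hc : c < alphaStar g A) :
    ∀ᶠ i in l, c < alphaStar (gs i) (As i) := by
  rcases lt_or_ge c 0 with hc0 | hc0
  · exact Eventually.of_forall fun _ => hc0.trans_le alphaStar_nonneg
  obtain ⟨β, hcβ, hβ⟩ := exists_between hc
  have hβ' : β ∈ Ioo 0 1 := ⟨hc0.trans_lt hcβ, hβ.trans_le alphaStar_le_one⟩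
  filter_upwards [hA.eventually_lt (hg β hβ') (lt_of_lt_alphaStar hβ'.1 hβ), hanti]
    with i hAg hgi
  refine hcβ.trans_le (le_alphaStar hβ'.2.le fun b hb hbA => le_of_not_gt fun hbβ => ?_)
  exact (hgi hb hβ' hbβ.le).not_gt (hbA.trans_lt hAg)

lemma eventually_alphaStar_lt (hA : Tendsto As l (𝓝 A))
    (hg : ∀ β ∈ Ioo 0 1, Tendsto (gs · β) l (𝓝 (g β))) (hc : alphaTilde g A < c) :
    ∀ᶠ i in l, alphaStar (gs i) (As i) < c := by
  rcases lt_or_ge 1 c with h1 | h1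
  · exact Eventually.of_forall fun _ => alphaStar_le_one.trans_lt h1
  obtain ⟨c', hc', hc'c⟩ := exists_between hc
  have hc'01 : c' ∈ Ioo 0 1 := ⟨alphaTilde_nonneg.trans_lt hc', hc'c.trans_le h1⟩
  filter_upwards [(hg c' hc'01).eventually_lt hA (lt_of_alphaTilde_lt hc'01 hc')] with i hi
  exact (alphaStar_le hc'01 hi.le).trans_lt hc'c

end AlphaStar

section Empirical

variable {n N : ℕ} {v : ℕ → Fin n → ℝ}

lemma empJoint_zero : empJoint 0 v = 0 := by
  simp [empJoint]

lemma isProbabilityMeasure_empJoint (hN : N ≠ 0) : IsProbabilityMeasure (empJoint N v) :=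
  ⟨by simp [empJoint, ENNReal.inv_mul_cancel (Nat.cast_ne_zero.2 hN) (ENNReal.natCast_ne_top N)]⟩

instance : IsFiniteMeasure (empJoint N v) := by
  rcases eq_or_ne N 0 with rfl | hN
  · rw [empJoint_zero]
    infer_instance
  · have := isProbabilityMeasure_empJoint (v := v) hN
    infer_instance

lemma empJoint_real_apply {s : Set (Fin n → ℝ)} (hs : MeasurableSet s) :
    (empJoint N v).real s = (∑ k ∈ Finset.range N, s.indicator 1 (v k)) / N := by
  simp only [empJoint, measureReal_def, Measure.smul_apply, Measure.finsetSum_apply,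
    Measure.dirac_apply' _ hs, smul_eq_mul, ENNReal.toReal_mul, ENNReal.toReal_inv,
    ENNReal.toReal_natCast]
  rw [ENNReal.toReal_sum fun k _ => ?_, inv_mul_eq_div]
  · congr 1
    refine Finset.sum_congr rfl fun k _ => ?_
    by_cases h : v k ∈ s <;> simp [h]
  · by_cases h : v k ∈ s <;> simp [h]

end Empirical

section StrongLaw

variable {Ω : Type*} [MeasurableSpace Ω] {P : Measure Ω} [IsFiniteMeasure P] {n : ℕ}
  {V : ℕ → Ω → Fin n → ℝ} {μ : Measure (Fin n → ℝ)}

theorem ae_tendsto_empJoint_real (hV : ∀ k, Measurable (V k)) (hindep : iIndepFun V P)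
    (hident : ∀ k, P.map (V k) = μ) {s : Set (Fin n → ℝ)} (hs : MeasurableSet s) :
    ∀ᵐ ω ∂P, Tendsto (fun N => (empJoint N fun k => V k ω).real s) atTop (𝓝 (μ.real s)) := by
  have hind : Measurable (s.indicator (1 : (Fin n → ℝ) → ℝ)) := measurable_one.indicator hs
  set B : ℕ → Ω → ℝ := fun k => s.indicator 1 ∘ V k
  have hint : Integrable (B 0) P :=
    ((integrable_const 1).indicator hs).comp_measurable (hV 0)
  have hident' : ∀ k, IdentDistrib (B k) (B 0) P P := fun k =>
    IdentDistrib.comp ⟨(hV k).aemeasurable, (hV 0).aemeasurable, (hident k).trans (hident 0).symm⟩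
      hind
  have hmean : P[B 0] = μ.real s := by
    rw [← integral_indicator_one hs, ← hident 0, integral_map (hV 0).aemeasurable
      hind.aestronglyMeasurable]
    rfl
  have hslln := strong_law_ae_real B hint
    (fun k l hkl => (hindep.comp (fun _ => s.indicator 1) fun _ => hind).indepFun hkl) hident'
  filter_upwards [hslln] with ω hω
  rw [hmean] at hω
  simp only [empJoint_real_apply hs]
  exact hω

theorem ae_tendsto_empJoint_map_Iic (hV : ∀ k, Measurable (V k)) (hindep : iIndepFun V P)
    (hident : ∀ k, P.map (V k) = μ) {f : (Fin n → ℝ) → ℝ} (hf : Measurable f) :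
    ∀ᵐ ω ∂P, ∀ r : ℚ, Tendsto (fun N => ((empJoint N fun k => V k ω).map f).real (Iic (r : ℝ)))
      atTop (𝓝 ((μ.map f).real (Iic (r : ℝ)))) := by
  refine ae_all_iff.2 fun r => ?_
  simpa only [map_measureReal_apply hf measurableSet_Iic] using
    ae_tendsto_empJoint_real hV hindep hident (hf measurableSet_Iic)

end StrongLaw

lemma mDQVaR_eq_alphaStar {n : ℕ} (ν : Measure (Fin n → ℝ)) (α : ℝ) :
    mDQVaR ν α = alphaStar (mVaR (ν.map fun x => ∑ j, x j))
      (∑ j, mVaR (ν.map fun x => x j) α) / α := rfl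

lemma mDQVaR_mem_Icc {n : ℕ} (ν : Measure (Fin n → ℝ)) {α : ℝ} (hα : 0 < α) :
    mDQVaR ν α ∈ Icc 0 α⁻¹ := by
  rw [mDQVaR_eq_alphaStar, ← one_div]
  exact ⟨div_nonneg alphaStar_nonneg hα.le, div_le_div_of_nonneg_right alphaStar_le_one hα.le⟩

theorem mDQVaR_bounds_of_tendsto {ι : Type*} {l : Filter ι} {n : ℕ}
    {μ : Measure (Fin n → ℝ)} [IsProbabilityMeasure μ]
    {νs : ι → Measure (Fin n → ℝ)} [∀ i, IsFiniteMeasure (νs i)]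
    (hνs : ∀ᶠ i in l, IsProbabilityMeasure (νs i)) {α : ℝ} (hα : α ∈ Ioo 0 1)
    (hqS : ContinuousOn (quantile (μ.map fun x => ∑ j, x j)) (Ioo 0 1))
    (hqX : ∀ j, ContinuousAt (quantile (μ.map fun x => x j)) (1 - α))
    (hS : ∀ r : ℚ, Tendsto (fun i => ((νs i).map fun x => ∑ j, x j).real (Iic (r : ℝ))) l
      (𝓝 ((μ.map fun x => ∑ j, x j).real (Iic (r : ℝ)))))
    (hX : ∀ j, ∀ r : ℚ, Tendsto (fun i => ((νs i).map fun x => x j).real (Iic (r : ℝ))) l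
      (𝓝 ((μ.map fun x => x j).real (Iic (r : ℝ))))) :
    (∀ c < mDQVaR μ α, ∀ᶠ i in l, c < mDQVaR (νs i) α) ∧
    ∀ c > alphaTilde (mVaR (μ.map fun x => ∑ j, x j)) (∑ j, mVaR (μ.map fun x => x j) α) / α,
      ∀ᶠ i in l, mDQVaR (νs i) α < c := by
  have : IsProbabilityMeasure (μ.map fun x => ∑ j, x j) :=
    Measure.isProbabilityMeasure_map (by fun_prop)
  have : ∀ j, IsProbabilityMeasure (μ.map fun x => x j) :=
    fun j => Measure.isProbabilityMeasure_map (measurable_pi_apply j).aemeasurable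
  have hA : Tendsto (fun i => ∑ j, mVaR ((νs i).map fun x => x j) α) l
      (𝓝 (∑ j, mVaR (μ.map fun x => x j) α)) :=
    tendsto_finsetSum _ fun j _ => tendsto_quantile_of_tendsto_measureReal_Iic
      ⟨by linarith [hα.2], by linarith [hα.1]⟩ (hqX j) (hX j)
  have hg : ∀ β ∈ Ioo 0 1, Tendsto (fun i => mVaR ((νs i).map fun x => ∑ j, x j) β) l
      (𝓝 (mVaR (μ.map fun x => ∑ j, x j) β)) := fun β hβ => by
    have hβ' : 1 - β ∈ Ioo (0 : ℝ) 1 := ⟨by linarith [hβ.2], by linarith [hβ.1]⟩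
    exact tendsto_quantile_of_tendsto_measureReal_Iic hβ' (hqS.continuousAt
      (isOpen_Ioo.mem_nhds hβ')) hS
  have hanti : ∀ᶠ i in l, AntitoneOn (mVaR ((νs i).map fun x => ∑ j, x j)) (Ioo 0 1) :=
    hνs.mono fun i _ => @antitoneOn_mVaR _ (Measure.isProbabilityMeasure_map (by fun_prop))
  refine ⟨fun c hc => ?_, fun c hc => ?_⟩
  · filter_upwards [eventually_lt_alphaStar hA hg hanti ((lt_div_iff₀ hα.1).1 hc)] with i hi
    exact (lt_div_iff₀ hα.1).2 hi
  · filter_upwards [eventually_alphaStar_lt hA hg ((div_lt_iff₀ hα.1).1 hc)] with i hi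
    exact (div_lt_iff₀ hα.1).2 hi

lemma le_liminf_and_limsup_le_of_mem_Icc {ι : Type*} {l : Filter ι} [l.NeBot] {u : ι → ℝ}
    {m M a b : ℝ}
    (hu : ∀ i, u i ∈ Icc m M) (ha : ∀ c < a, ∀ᶠ i in l, c < u i)
    (hb : ∀ c > b, ∀ᶠ i in l, u i < c) : a ≤ liminf u l ∧ limsup u l ≤ b := by
  have hle : IsBoundedUnder (· ≤ ·) l u := isBoundedUnder_of ⟨M, fun i => (hu i).2⟩
  have hge : IsBoundedUnder (· ≥ ·) l u := isBoundedUnder_of ⟨m, fun i => (hu i).1⟩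
  exact ⟨(le_liminf_iff hle.isCoboundedUnder_ge hge).2 ha,
    (limsup_le_iff hge.isCoboundedUnder_le hle).2 hb⟩

/-- strong consistency of the empirical estimator of `DQ^{VaR}_α`
based on i.i.d. samples, where the estimator is `DQ^{VaR}_α` evaluated at the
empirical joint distribution. -/
theorem DQVaR_empirical_consistency
    {Ω : Type*} [MeasurableSpace Ω] (P : Measure Ω) [IsProbabilityMeasure P]
    {n : ℕ} (Xs : ℕ → Fin n → Ω → ℝ) (X : Fin n → Ω → ℝ)
    (hXsm : ∀ k i, Measurable (Xs k i)) (hXm : ∀ i, Measurable (X i))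
    -- the samples `X^{(k)}` are i.i.d. copies of `X`
    (hindep : iIndepFun (m := fun _ : ℕ => (inferInstance : MeasurableSpace (Fin n → ℝ)))
      (fun k => fun ω => fun i => Xs k i ω) P)
    (hident : ∀ k, P.map (fun ω => fun i => Xs k i ω) = P.map (fun ω => fun i => X i ω))
    (α : ℝ) (hα : α ∈ Set.Ioo (0:ℝ) 1)
    (hqX : ∀ i, ContinuousAt (quantileFn P (X i)) (1 - α))
    (hqS : ContinuousOn (quantileFn P (fun ω => ∑ i, X i ω)) (Set.Ioo (0:ℝ) 1))
    (αtilde : ℝ)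
    (hαtilde : αtilde = sSup {β : ℝ | β ∈ Set.Ioo (0:ℝ) 1 ∧
        (∑ i, VaR P α (X i)) ≤ VaR P β (fun ω => ∑ i, X i ω)}) :
    (∀ᵐ ω ∂P,
      DQVaR P α X ≤ atTop.liminf (fun N => mDQVaR (empJoint N (fun k => fun i => Xs k i ω)) α)
      ∧ atTop.limsup (fun N => mDQVaR (empJoint N (fun k => fun i => Xs k i ω)) α) ≤ αtilde / α)
    ∧ (StrictAntiOn (fun β => VaR P β (fun ω => ∑ i, X i ω)) (Set.Ioo (0:ℝ) 1) →
        ∀ᵐ ω ∂P, Tendsto (fun N => mDQVaR (empJoint N (fun k => fun i => Xs k i ω)) α)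
          atTop (𝓝 (DQVaR P α X))) := by
  set μ := P.map fun ω i => X i ω
  have : IsProbabilityMeasure μ :=
    Measure.isProbabilityMeasure_map (measurable_pi_lambda _ hXm).aemeasurable
  have hαt : αtilde = alphaTilde (mVaR (μ.map fun x => ∑ i, x i))
      (∑ i, mVaR (μ.map fun x => x i) α) := by
    simp only [hαtilde, alphaTilde, VaR_sum_eq_mVaR_map hXm, VaR_eq_mVaR_map_eval hXm]
    rfl
  have hbounds : ∀ᵐ ω ∂P,
      (∀ c < mDQVaR μ α, ∀ᶠ N in atTop, c < mDQVaR (empJoint N fun k i => Xs k i ω) α) ∧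
      ∀ c > αtilde / α, ∀ᶠ N in atTop, mDQVaR (empJoint N fun k i => Xs k i ω) α < c := by
    have hVs : ∀ k, Measurable fun ω i => Xs k i ω := fun k => measurable_pi_lambda _ (hXsm k)
    filter_upwards [ae_tendsto_empJoint_map_Iic hVs hindep hident (f := fun x => ∑ i, x i)
      (by fun_prop),
      ae_all_iff.2 fun i => ae_tendsto_empJoint_map_Iic hVs hindep hident (measurable_pi_apply i)]
      with ω hS hX
    rw [hαt]
    refine mDQVaR_bounds_of_tendsto ((eventually_ne_atTop 0).mono fun N hN =>
      isProbabilityMeasure_empJoint hN) hα ?_ (fun i => ?_) hS hX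
    · rwa [quantileFn_sum_eq_quantile_map hXm] at hqS
    · simpa only [quantileFn_eq_quantile_map_eval hXm] using hqX i
  rw [DQVaR_eq_mDQVaR_map hXm]
  refine ⟨?_, fun hanti => ?_⟩
  · filter_upwards [hbounds] with ω h
    exact le_liminf_and_limsup_le_of_mem_Icc (fun N => mDQVaR_mem_Icc _ hα.1) h.1 h.2
  · have heq : mDQVaR μ α = αtilde / α := by
      rw [mDQVaR_eq_alphaStar, hαt, alphaStar_eq_alphaTilde
        (by simpa only [VaR_sum_eq_mVaR_map hXm] using hanti)]
    filter_upwards [hbounds] with ω h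
    exact tendsto_order.2 ⟨h.1, heq ▸ h.2⟩
end

section
/- For every random vector X = (X_1,…,X_n) of real random variables with S = Σ_{i=1}^n X_i and every α ∈ (0,1), DQ^{VaR}_α(X) = (1/α) · P(S > Σ_{i=1}^n VaR_α(X_i)). -/
/-!
Since the distribution function of `S` is right-continuous, `VaR_β(S) ≤ t` holds exactly when
`P(S ≤ t) ≥ 1 - β`, i.e. when `P(S > t) ≤ β`. With `t = ∑ VaR_α(X_i)`, the levels entering the
definition of `DQ^{VaR}_α(X)` are therefore `1` and the `β ∈ (0,1)` with `β ≥ P(S > t)`, whose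
infimum is `P(S > t)`.
-/

open MeasureTheory

open Filter Set ProbabilityTheory

theorem StieltjesFunction.csInf_setOf_le_le_iff {R : Type*} [ConditionallyCompleteLinearOrder R]
    [TopologicalSpace R] [OrderTopology R] [DenselyOrdered R] [NoMaxOrder R]
    (F : StieltjesFunction R) {c : ℝ} {t : R} (hbdd : BddBelow {x | c ≤ F x})
    (hne : {x | c ≤ F x}.Nonempty) : sInf {x | c ≤ F x} ≤ t ↔ c ≤ F t := by
  refine ⟨fun h ↦ ?_, fun h ↦ csInf_le hbdd h⟩
  have hright : ∀ x, t < x → c ≤ F x := fun x hx ↦ by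
    obtain ⟨y, hy, hyx⟩ := (csInf_lt_iff hbdd hne).mp (h.trans_lt hx)
    exact hy.trans (F.mono hyx.le)
  exact ge_of_tendsto ((F.right_continuous t).mono Ioi_subset_Ici_self)
    (eventually_nhdsWithin_of_forall hright)

theorem ProbabilityTheory.csInf_setOf_le_cdf_le_iff (μ : Measure ℝ) {c t : ℝ} (hc0 : 0 < c)
    (hc1 : c < 1) : sInf {x | c ≤ cdf μ x} ≤ t ↔ c ≤ cdf μ t := by
  refine (cdf μ).csInf_setOf_le_le_iff ?_ ?_
  · obtain ⟨a, ha⟩ := eventually_atBot.mp ((tendsto_cdf_atBot μ).eventually (gt_mem_nhds hc0))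
    exact ⟨a, fun x hx ↦ not_lt.mp fun hxa ↦ (ha x hxa.le).not_ge hx⟩
  · exact ((tendsto_cdf_atTop μ).eventually (lt_mem_nhds hc1)).exists.imp fun _ ↦ le_of_lt

section VaR

variable {Ω : Type*} [MeasurableSpace Ω] (P : Measure Ω) [IsProbabilityMeasure P]
  {S : Ω → ℝ}

theorem VaR_eq_csInf_cdf (hS : AEMeasurable S P) (β : ℝ) :
    VaR P β S = sInf {x | 1 - β ≤ cdf (P.map S) x} := by
  have := Measure.isProbabilityMeasure_map hS
  simp_rw [cdf_eq_real, measureReal_def, Measure.map_apply_of_aemeasurable hS measurableSet_Iic]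
  rfl

theorem VaR_le_iff (hS : AEMeasurable S P) {β : ℝ} (hβ : β ∈ Ioo (0 : ℝ) 1) (t : ℝ) :
    VaR P β S ≤ t ↔ P.real {ω | t < S ω} ≤ β := by
  have := Measure.isProbabilityMeasure_map hS
  have hcompl : P.real {ω | t < S ω} = 1 - P.real (S ⁻¹' Iic t) := by
    rw [← probReal_univ (μ := P),
      ← measureReal_compl₀ (hS.nullMeasurableSet_preimage measurableSet_Iic)]
    congr 1
    ext ω
    simp
  rw [VaR_eq_csInf_cdf P hS, csInf_setOf_le_cdf_le_iff _ (by linarith [hβ.2]) (by linarith [hβ.1]),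
    cdf_eq_real, map_measureReal_apply_of_aemeasurable hS measurableSet_Iic, hcompl]
  constructor <;> intro h <;> linarith

end VaR

theorem csInf_insert_one_setOf_mem_Ioo_and_le {b : ℝ} (hb0 : 0 ≤ b) (hb1 : b ≤ 1) :
    sInf (insert 1 {β : ℝ | β ∈ Ioo (0 : ℝ) 1 ∧ b ≤ β}) = b := by
  refine csInf_eq_of_forall_ge_of_forall_gt_exists_lt (insert_nonempty _ _) ?_ ?_
  · rintro β (rfl | ⟨-, hβ⟩) <;> assumption
  · intro w hw
    rcases hb1.lt_or_eq with hb1 | rfl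
    · refine ⟨(b + min w 1) / 2, mem_insert_of_mem _ ⟨⟨?_, ?_⟩, ?_⟩, ?_⟩ <;>
        linarith [min_le_left w 1, min_le_right w 1, lt_min hw hb1]
    · exact ⟨1, mem_insert _ _, hw⟩

theorem DQVaR_prob_formula_general
    {Ω : Type*} [MeasurableSpace Ω] (P : Measure Ω) [IsProbabilityMeasure P]
    {n : ℕ} (X : Fin n → Ω → ℝ) (hXm : ∀ i, Measurable (X i))
    (α : ℝ) :
    DQVaR P α X
      = (1 / α) * (P {ω | (∑ i, VaR P α (X i)) < ∑ i, X i ω}).toReal := by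
  set t := ∑ i, VaR P α (X i)
  have hS : AEMeasurable (fun ω ↦ ∑ i, X i ω) P :=
    (Finset.measurable_sum Finset.univ fun i _ ↦ hXm i).aemeasurable
  have hlevels : {β : ℝ | β ∈ Ioo (0 : ℝ) 1 ∧ VaR P β (fun ω ↦ ∑ i, X i ω) ≤ t}
      = {β | β ∈ Ioo (0 : ℝ) 1 ∧ P.real {ω | t < ∑ i, X i ω} ≤ β} := by
    ext β
    exact and_congr_right fun hβ ↦ VaR_le_iff P hS hβ t
  rw [DQVaR, hlevels, csInf_insert_one_setOf_mem_Ioo_and_le measureReal_nonneg measureReal_le_one,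
    div_eq_inv_mul, one_div, measureReal_def]

/-- For every random vector `X = (X_1,…,X_n)` with `S = ∑ X_i` and every
`α ∈ (0,1)`, `DQ^{VaR}_α(X) = (1/α) ⬝ P(S > ∑_i VaR_α(X_i))`. -/
theorem DQVaR_prob_formula
    {Ω : Type*} [MeasurableSpace Ω] (P : Measure Ω) [IsProbabilityMeasure P]
    {n : ℕ} (X : Fin n → Ω → ℝ) (hXm : ∀ i, Measurable (X i))
    (α : ℝ) (hα : α ∈ Set.Ioo (0:ℝ) 1) :
    DQVaR P α X
      = (1 / α) * (P {ω | (∑ i, VaR P α (X i)) < ∑ i, X i ω}).toReal :=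
  DQVaR_prob_formula_general P X hXm α
end

section
/- For every integrable real random variable X and every α ∈ (0,1), there exists exactly one t ∈ ℝ satisfying (1−α) E[(X−t)_+] = α E[(X−t)_−]. -/
/-!
Write `f t = E[(X - t)₊]` and `g t = E[(t - X)₊]`. Then `f` is antitone, `g` is monotone and
`f t - g t = E[X] - t`, so on any interval `[s, t]` the decrease of `f` and the increase of `g`
are nonnegative and add up to `t - s`. Consequently `φ = (1 - α) f - α g` is continuous and
decreases at least at rate `min α (1 - α) > 0`; it therefore runs from `+∞` to `-∞` and has
exactly one zero.
-/

open MeasureTheory Filter Set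

theorem existsUnique_eq_zero_of_continuous_of_le_sub {φ : ℝ → ℝ} (hφ : Continuous φ) {c : ℝ}
    (hc : 0 < c) (h : ∀ s t, s ≤ t → c * (t - s) ≤ φ s - φ t) : ∃! t, φ t = 0 := by
  have hanti : StrictAnti φ := fun s t hst => by nlinarith [h s t hst.le]
  have h_top : Tendsto φ atTop atBot := by
    refine tendsto_atBot_mono' atTop ?_ (tendsto_atBot_add_const_left _ (φ 0)
      (tendsto_neg_atTop_atBot.comp (tendsto_id.const_mul_atTop hc)))
    filter_upwards [eventually_ge_atTop 0] with t ht
    simp only [Function.comp_apply, id]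
    linarith [h 0 t ht]
  have h_bot : Tendsto φ atBot atTop := by
    refine tendsto_atTop_mono' atBot ?_ (tendsto_atTop_add_const_left _ (φ 0)
      (tendsto_neg_atBot_atTop.comp (tendsto_id.const_mul_atBot hc)))
    filter_upwards [eventually_le_atBot 0] with s hs
    simp only [Function.comp_apply, id]
    linarith [h s 0 hs]
  obtain ⟨t, ht⟩ := hφ.surjective' h_bot h_top 0
  exact ⟨t, ht, fun s hs => hanti.injective (hs.trans ht.symm)⟩

section IncrementSplit

variable {f g : ℝ → ℝ} {a : ℝ}

theorem sub_add_sub_eq_of_sub_eq (hfg : ∀ t, f t - g t = a - t) (s t : ℝ) :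
    (f s - f t) + (g t - g s) = t - s := by
  linarith [hfg s, hfg t]

theorem Antitone.lipschitzWith_one_of_sub_eq (hf : Antitone f) (hg : Monotone g)
    (hfg : ∀ t, f t - g t = a - t) : LipschitzWith 1 f := by
  refine LipschitzWith.of_le_add fun s t => ?_
  rcases le_total s t with hst | hts
  · linarith [sub_add_sub_eq_of_sub_eq hfg s t, hg hst, Real.dist_eq s t, neg_abs_le (s - t)]
  · linarith [hf hts, dist_nonneg (x := s) (y := t)]

theorem Monotone.lipschitzWith_one_of_sub_eq (hg : Monotone g) (hf : Antitone f)
    (hfg : ∀ t, f t - g t = a - t) : LipschitzWith 1 g := by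
  refine LipschitzWith.of_le_add fun s t => ?_
  rcases le_total s t with hst | hts
  · linarith [hg hst, dist_nonneg (x := s) (y := t)]
  · linarith [sub_add_sub_eq_of_sub_eq hfg t s, hf hts, Real.dist_eq s t, le_abs_self (s - t)]

theorem min_mul_sub_le_of_sub_eq (hf : Antitone f) (hg : Monotone g)
    (hfg : ∀ t, f t - g t = a - t) (α : ℝ) {s t : ℝ} (hst : s ≤ t) :
    min α (1 - α) * (t - s) ≤ ((1 - α) * f s - α * g s) - ((1 - α) * f t - α * g t) := by
  have hf_inc : 0 ≤ f s - f t := sub_nonneg.2 (hf hst)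
  have hg_inc : 0 ≤ g t - g s := sub_nonneg.2 (hg hst)
  calc min α (1 - α) * (t - s)
      = min α (1 - α) * (f s - f t) + min α (1 - α) * (g t - g s) := by
        rw [← mul_add, sub_add_sub_eq_of_sub_eq hfg]
    _ ≤ (1 - α) * (f s - f t) + α * (g t - g s) := by
        gcongr
        exacts [min_le_right _ _, min_le_left _ _]
    _ = ((1 - α) * f s - α * g s) - ((1 - α) * f t - α * g t) := by ring

theorem existsUnique_mul_eq_mul_of_sub_eq (hf : Antitone f) (hg : Monotone g)
    (hfg : ∀ t, f t - g t = a - t) {α : ℝ} (hα : α ∈ Ioo 0 1) :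
    ∃! t, (1 - α) * f t = α * g t := by
  have hcont : Continuous fun t => (1 - α) * f t - α * g t :=
    ((hf.lipschitzWith_one_of_sub_eq hg hfg).continuous.const_mul _).sub
      ((hg.lipschitzWith_one_of_sub_eq hf hfg).continuous.const_mul _)
  simpa only [sub_eq_zero] using existsUnique_eq_zero_of_continuous_of_le_sub hcont
    (lt_min hα.1 (sub_pos.2 hα.2)) fun s t hst => min_mul_sub_le_of_sub_eq hf hg hfg α hst

end IncrementSplit

section PartialMoments

variable {Ω : Type*} [MeasurableSpace Ω] {μ : Measure Ω} [IsFiniteMeasure μ] {X : Ω → ℝ}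

theorem antitone_integral_max_sub_zero (hX : Integrable X μ) :
    Antitone fun t => ∫ ω, max (X ω - t) 0 ∂μ := fun s t hst =>
  integral_mono (hX.sub (integrable_const t)).pos_part (hX.sub (integrable_const s)).pos_part
    fun ω => max_le_max (by linarith) le_rfl

theorem monotone_integral_max_sub_zero (hX : Integrable X μ) :
    Monotone fun t => ∫ ω, max (t - X ω) 0 ∂μ := fun s t hst =>
  integral_mono ((integrable_const s).sub hX).pos_part ((integrable_const t).sub hX).pos_part
    fun ω => max_le_max (by linarith) le_rfl

theorem integral_max_sub_zero_sub_integral_max_sub_zero (hX : Integrable X μ) (t : ℝ) :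
    ∫ ω, max (X ω - t) 0 ∂μ - ∫ ω, max (t - X ω) 0 ∂μ = ∫ ω, X ω ∂μ - μ.real univ * t := by
  have h_pos : Integrable (fun ω => max (X ω - t) 0) μ := (hX.sub (integrable_const t)).pos_part
  have h_neg : Integrable (fun ω => max (t - X ω) 0) μ := ((integrable_const t).sub hX).pos_part
  rw [← integral_sub h_pos h_neg]
  simp only [← neg_sub (X _), max_zero_sub_max_neg_zero_eq_self]
  rw [integral_sub hX (integrable_const t), integral_const, smul_eq_mul]

end PartialMoments

theorem expectile_existsUnique_general
    {Ω : Type*} [MeasurableSpace Ω] (P : Measure Ω) [IsProbabilityMeasure P]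
    (X : Ω → ℝ) (hXint : Integrable X P)
    (α : ℝ) (hα : α ∈ Set.Ioo (0:ℝ) 1) :
    ∃! t : ℝ,
      (1 - α) * ∫ ω, max (X ω - t) 0 ∂P = α * ∫ ω, max (t - X ω) 0 ∂P :=
  existsUnique_mul_eq_mul_of_sub_eq (antitone_integral_max_sub_zero hXint)
    (monotone_integral_max_sub_zero hXint)
    (fun t => by simpa using integral_max_sub_zero_sub_integral_max_sub_zero hXint t) hα

/-- For every integrable real random variable `X` on a probability space and every
`α ∈ (0,1)`, there is exactly one `t ∈ ℝ` with `(1−α) E[(X−t)₊] = α E[(X−t)₋]`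
(the expectile of `X` at level `α`). -/
theorem expectile_existsUnique
    {Ω : Type*} [MeasurableSpace Ω] (P : Measure Ω) [IsProbabilityMeasure P]
    (X : Ω → ℝ) (hXm : Measurable X) (hXint : Integrable X P)
    (α : ℝ) (hα : α ∈ Set.Ioo (0:ℝ) 1) :
    ∃! t : ℝ,
      (1 - α) * ∫ ω, max (X ω - t) 0 ∂P = α * ∫ ω, max (t - X ω) 0 ∂P :=
  expectile_existsUnique_general P X hXint α hα
end
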